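/- arXiv:2501.05123 — 2 statements merged into one kernel-verified Lean document; each statement's English description precedes it below -/
import Mathlib

section
/- Let n ≥ 3 and let D be a nonempty set of integers, each of which occurs as a finite directed distance between some pair of vertices of an oriented cycle C⃗_n. If C⃗_n is D-antimagic and its orientation is neither unidirectional nor Θ, then min(D) = 0. -/
open scoped Classical

/-- There is a directed walk of length `k` from `u` to `v` in the digraph with arc relation `A`. -/
def WalkLen {V : Type*} (A : V → V → Prop) : ℕ → V → V → Prop
  | 0, u, v => u = v
  | k + 1, u, v => ∃ w, A u w ∧ WalkLen A k w v

/-- The directed distance from `u` to `v` is exactly `k`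
(i.e. `k` is the length of a shortest directed path from `u` to `v`). -/
def HasDist {V : Type*} (A : V → V → Prop) (u v : V) (k : ℕ) : Prop :=
  WalkLen A k u v ∧ ∀ m < k, ¬ WalkLen A m u v

/-- `y` belongs to the `D`-neighborhood of `v`: the distance from `v` to `y` lies in `D`. -/
def InDNbhd {V : Type*} (A : V → V → Prop) (D : Set ℕ) (v y : V) : Prop :=
  ∃ k ∈ D, HasDist A v y k

/-- The `D`-weight of `v` under the labeling `f`: the sum of labels of the `D`-neighbors. -/
noncomputable def dWeight {V : Type*} [Fintype V] (A : V → V → Prop) (D : Set ℕ)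
    (f : V → ℕ) (v : V) : ℕ :=
  ∑ y : V, if InDNbhd A D v y then f y else 0

/-- The digraph `(V, A)` is `D`-antimagic: some bijective labeling of the vertices by
`1, …, |V|` gives pairwise distinct `D`-weights. -/
def DAntimagic (V : Type*) [Fintype V] (A : V → V → Prop) (D : Set ℕ) : Prop :=
  ∃ f : V ≃ Fin (Fintype.card V),
    Function.Injective fun v => dWeight A D (fun y => (f y : ℕ) + 1) v

/-- The orientation of the cycle `C_n` determined by `σ`: the edge between vertex `i` and
vertex `(i+1) mod n` is directed `i → i+1` when `σ i = true`, and `i+1 → i` otherwise. -/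
def cycleArc (n : ℕ) (σ : Fin n → Bool) (u v : Fin n) : Prop :=
  (σ u = true ∧ (v : ℕ) = ((u : ℕ) + 1) % n) ∨
  (σ v = false ∧ (u : ℕ) = ((v : ℕ) + 1) % n)

/-- The arc relation of the unidirectional oriented cycle `C⃗_n`: arcs `i → (i+1) mod n`. -/
def uniArc (n : ℕ) (u v : Fin n) : Prop :=
  (v : ℕ) = ((u : ℕ) + 1) % n

/-- An orientation of `C_n` is unidirectional if all edges are directed the same way around. -/
def Unidirectional (n : ℕ) (σ : Fin n → Bool) : Prop :=
  (∀ i, σ i = true) ∨ (∀ i, σ i = false)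

/-- A sink: a vertex of out-degree 0. -/
def IsSink {V : Type*} (A : V → V → Prop) (u : V) : Prop :=
  ∀ v, ¬ A u v

/-- A source: a vertex of in-degree 0. -/
def IsSource {V : Type*} (A : V → V → Prop) (u : V) : Prop :=
  ∀ v, ¬ A v u

/-- A digraph is Θ-oriented if it has exactly one sink and exactly one source, and
they are adjacent (so the arc between them goes from the source to the sink). -/
def ThetaOriented {V : Type*} (A : V → V → Prop) : Prop :=
  ∃ s t, IsSink A s ∧ IsSource A t ∧ (∀ u, IsSink A u → u = s) ∧
    (∀ u, IsSource A u → u = t) ∧ A t s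

/-- The arc relation of the Θ-oriented cycle on `Fin n`:
arcs `i → i+1` for `0 ≤ i ≤ n-2`, together with the arc `0 → n-1`. -/
def thetaArc (n : ℕ) (u v : Fin n) : Prop :=
  ((v : ℕ) = (u : ℕ) + 1) ∨ ((u : ℕ) = 0 ∧ (v : ℕ) = n - 1)

/-- The arc relation of a disjoint union of `c` oriented cycles, the `j`-th component having
`len j` vertices and arc relation `A j`. -/
def unionArc (c : ℕ) (len : Fin c → ℕ)
    (A : ∀ j, Fin (len j) → Fin (len j) → Prop)
    (u v : Σ j, Fin (len j)) : Prop :=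
  ∃ h : u.1 = v.1, A v.1 (Fin.cast (congrArg len h) u.2) v.2

open Fin.CommRing

section CycleAux
variable {n : ℕ} {σ : Fin n → Bool} [NeZero n]

lemma val_mod_iff (hn : 3 ≤ n) (u v : Fin n) :
    (v : ℕ) = ((u : ℕ) + 1) % n ↔ v = u + 1 := by
  have h1 : ((u + 1 : Fin n) : ℕ) = ((u : ℕ) + 1) % n := by
    rw [Fin.val_add, Fin.val_one']
    congr 1
    rw [Nat.mod_eq_of_lt (by omega)]
  rw [← h1, Fin.ext_iff]

lemma arc_iff (hn : 3 ≤ n) (u v : Fin n) :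
    cycleArc n σ u v ↔ (σ u = true ∧ v = u + 1) ∨ (σ v = false ∧ u = v + 1) := by
  unfold cycleArc
  rw [val_mod_iff hn, val_mod_iff hn]

lemma sink_iff (hn : 3 ≤ n) (u : Fin n) :
    IsSink (cycleArc n σ) u ↔ (σ u = false ∧ σ (u - 1) = true) := by
  constructor
  · intro h
    constructor
    · by_contra hu
      have hu' : σ u = true := by simpa using hu
      exact h (u + 1) ((arc_iff hn u (u+1)).mpr (Or.inl ⟨hu', rfl⟩))
    · by_contra hu
      have hu' : σ (u - 1) = false := by simpa using hu
      exact h (u - 1) ((arc_iff hn u (u-1)).mpr (Or.inr ⟨hu', (sub_add_cancel u 1).symm⟩))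
  · rintro ⟨h0, h1⟩ v hv
    rcases (arc_iff hn u v).mp hv with ⟨ht, -⟩ | ⟨hf, he⟩
    · rw [h0] at ht; simp at ht
    · have : v = u - 1 := by rw [he]; ring
      rw [this, h1] at hf; simp at hf

lemma source_iff (hn : 3 ≤ n) (u : Fin n) :
    IsSource (cycleArc n σ) u ↔ (σ u = true ∧ σ (u - 1) = false) := by
  constructor
  · intro h
    constructor
    · by_contra hu
      have hu' : σ u = false := by simpa using hu
      exact h (u + 1) ((arc_iff hn (u+1) u).mpr (Or.inr ⟨hu', rfl⟩))
    · by_contra hu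
      have hu' : σ (u - 1) = true := by simpa using hu
      exact h (u - 1) ((arc_iff hn (u-1) u).mpr (Or.inl ⟨hu', (sub_add_cancel u 1).symm⟩))
  · rintro ⟨h0, h1⟩ v hv
    rcases (arc_iff hn v u).mp hv with ⟨ht, he⟩ | ⟨hf, -⟩
    · have : v = u - 1 := by rw [he]; ring
      rw [this, h1] at ht; simp at ht
    · rw [h0] at hf; simp at hf

end CycleAux
section WalkAux
variable {V : Type*} {A : V → V → Prop} {D : Set ℕ}

lemma walk_sink {s : V} (hs : IsSink A s) {k : ℕ} {y : V} (h : WalkLen A k s y) :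
    k = 0 ∧ y = s := by
  cases k with
  | zero => exact ⟨rfl, h.symm⟩
  | succ m => obtain ⟨w, hw, -⟩ := h; exact absurd hw (hs w)

lemma sink_not_inD (h0 : 0 ∉ D) {s : V} (hs : IsSink A s) (y : V) :
    ¬ InDNbhd A D s y := by
  rintro ⟨k, hk, hwalk, -⟩
  obtain ⟨rfl, -⟩ := walk_sink hs hwalk
  exact h0 hk

lemma sink_dweight [Fintype V] (h0 : 0 ∉ D) {s : V} (hs : IsSink A s) (f : V → ℕ) :
    dWeight A D f s = 0 := by
  apply Finset.sum_eq_zero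
  intro y _
  rw [if_neg (sink_not_inD h0 hs y)]

lemma inD_uniqueOut (h0 : 0 ∉ D) {u s : V} (hs : IsSink A s)
    (hu : ∀ v, A u v ↔ v = s) (y : V) :
    InDNbhd A D u y ↔ (1 ∈ D ∧ y = s) := by
  have hus : A u s := (hu s).mpr rfl
  have hne : u ≠ s := fun h => hs s (h ▸ hus)
  constructor
  · rintro ⟨k, hk, hwalk, -⟩
    cases k with
    | zero => exact absurd hk h0
    | succ m =>
      obtain ⟨w, hw, hrest⟩ := hwalk
      rw [hu w] at hw
      subst hw
      obtain ⟨rfl, hy⟩ := walk_sink hs hrest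
      exact ⟨hk, hy⟩
  · rintro ⟨h1, hy⟩
    subst hy
    refine ⟨1, h1, ⟨⟨_, hus, rfl⟩, ?_⟩⟩
    intro m hm
    interval_cases m
    exact hne

lemma dWeight_congr [Fintype V] {f : V → ℕ} {u w : V}
    (h : ∀ y, InDNbhd A D u y ↔ InDNbhd A D w y) :
    dWeight A D f u = dWeight A D f w :=
  Finset.sum_congr rfl fun y _ => if_congr (h y) rfl rfl

end WalkAux

section CountAux
variable {n : ℕ} [NeZero n] (σ : Fin n → Bool)

lemma card_sink_eq_card_source :
    (Finset.univ.filter fun v : Fin n => σ v = false ∧ σ (v - 1) = true).card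
      = (Finset.univ.filter fun v : Fin n => σ v = true ∧ σ (v - 1) = false).card := by
  have key : ∀ v : Fin n,
      (if σ v = false ∧ σ (v - 1) = true then (1:ℤ) else 0)
        - (if σ v = true ∧ σ (v - 1) = false then (1:ℤ) else 0)
      = (if σ (v - 1) = true then (1:ℤ) else 0) - (if σ v = true then (1:ℤ) else 0) := by
    intro v
    cases h1 : σ v <;> cases h2 : σ (v - 1) <;> simp [h1, h2]
  have hshift : ∑ v : Fin n, (if σ (v - 1) = true then (1:ℤ) else 0)
      = ∑ v : Fin n, (if σ v = true then (1:ℤ) else 0) :=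
    Fintype.sum_equiv (Equiv.subRight (1 : Fin n))
      (fun v => if σ (v - 1) = true then (1:ℤ) else 0)
      (fun v => if σ v = true then (1:ℤ) else 0) (fun v => rfl)
  have hsum : ∑ v : Fin n,
      ((if σ v = false ∧ σ (v - 1) = true then (1:ℤ) else 0)
        - (if σ v = true ∧ σ (v - 1) = false then (1:ℤ) else 0)) = 0 := by
    calc _ = ∑ v : Fin n, ((if σ (v - 1) = true then (1:ℤ) else 0)
          - (if σ v = true then (1:ℤ) else 0)) := Finset.sum_congr rfl fun v _ => key v
      _ = 0 := by rw [Finset.sum_sub_distrib, hshift, sub_self]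
  rw [Finset.sum_sub_distrib, Finset.sum_boole, Finset.sum_boole, sub_eq_zero] at hsum
  exact_mod_cast hsum

lemma exists_sink_pred (hn : 3 ≤ n) (huni : ¬ Unidirectional n σ) :
    ∃ v : Fin n, σ v = false ∧ σ (v - 1) = true := by
  rw [Unidirectional, not_or] at huni
  obtain ⟨h1, h2⟩ := huni
  push_neg at h1 h2
  obtain ⟨i, hi⟩ := h1
  obtain ⟨j, hj⟩ := h2
  replace hi : σ i = false := by simpa using hi
  replace hj : σ j = true := by simpa using hj
  by_contra h
  push_neg at h
  have hstep : ∀ v : Fin n, σ v = false → σ (v - 1) = false := by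
    intro v hv
    have := h v hv
    simpa using this
  have hall : ∀ k : ℕ, σ (i - (k : Fin n)) = false := by
    intro k
    induction k with
    | zero => simpa using hi
    | succ m ih =>
      have : i - ((m : Fin n) + 1) = (i - (m : Fin n)) - 1 := by ring
      rw [Nat.cast_add, Nat.cast_one, this]
      exact hstep _ ih
  have := hall ((i - j : Fin n) : ℕ)
  rw [Fin.cast_val_eq_self, sub_sub_cancel] at this
  rw [this] at hj
  exact Bool.false_ne_true hj

end CountAux
/-- If an oriented cycle `C⃗_n` is `D`-antimagic for a distance set `D`
and its orientation is neither unidirectional nor Θ, then `min D = 0`. -/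
theorem antimagic_not_uni_not_theta_min_zero (n : ℕ) (hn : 3 ≤ n) (σ : Fin n → Bool)
    (D : Set ℕ) (hD : D.Nonempty)
    (hocc : ∀ d ∈ D, ∃ u v : Fin n, HasDist (cycleArc n σ) u v d)
    (hanti : DAntimagic (Fin n) (cycleArc n σ) D)
    (huni : ¬ Unidirectional n σ) (htheta : ¬ ThetaOriented (cycleArc n σ)) :
    sInf D = 0 := by
  haveI : NeZero n := ⟨by omega⟩
  rcases Classical.em (0 ∈ D) with h0 | h0
  · exact Nat.sInf_eq_zero.mpr (Or.inl h0)
  exfalso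
  obtain ⟨f, hf⟩ := hanti
  obtain ⟨s, hσs, hσs1⟩ := exists_sink_pred σ hn huni
  have hs : IsSink (cycleArc n σ) s := (sink_iff hn s).mpr ⟨hσs, hσs1⟩
  by_cases hex : ∃ s', IsSink (cycleArc n σ) s' ∧ s' ≠ s
  · obtain ⟨s', hs', hne⟩ := hex
    apply hne
    apply hf
    show dWeight _ _ _ s' = dWeight _ _ _ s
    rw [sink_dweight h0 hs', sink_dweight h0 hs]
  push_neg at hex
  have hcard := card_sink_eq_card_source σ
  have hsinkset : (Finset.univ.filter fun v : Fin n => σ v = false ∧ σ (v - 1) = true)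
      = {s} := by
    ext v
    simp only [Finset.mem_filter, Finset.mem_univ, true_and, Finset.mem_singleton]
    constructor
    · intro hv; exact hex v ((sink_iff hn v).mpr hv)
    · rintro rfl; exact ⟨hσs, hσs1⟩
  rw [hsinkset, Finset.card_singleton] at hcard
  have hsrc_uniq : ∀ t t' : Fin n,
      IsSource (cycleArc n σ) t → IsSource (cycleArc n σ) t' → t' = t := by
    intro t t' ht ht'
    have h1 := (source_iff hn t).mp ht
    have h2 := (source_iff hn t').mp ht'
    have hmem : t ∈ Finset.univ.filter
        fun v : Fin n => σ v = true ∧ σ (v - 1) = false := by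
      simp [h1.1, h1.2]
    have hmem' : t' ∈ Finset.univ.filter
        fun v : Fin n => σ v = true ∧ σ (v - 1) = false := by
      simp [h2.1, h2.2]
    exact Finset.card_le_one.mp (le_of_eq hcard.symm) t' hmem' t hmem
  by_cases ht1 : σ (s - 1 - 1) = false
  · apply htheta
    have hsrc : IsSource (cycleArc n σ) (s - 1) := (source_iff hn _).mpr ⟨hσs1, ht1⟩
    exact ⟨s, s - 1, hs, hsrc, hex, fun u hu => hsrc_uniq _ u hsrc hu,
      (arc_iff hn _ _).mpr (Or.inl ⟨hσs1, (sub_add_cancel s 1).symm⟩)⟩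
  by_cases ht2 : σ (s + 1) = true
  · apply htheta
    have hsrc : IsSource (cycleArc n σ) (s + 1) := by
      rw [source_iff hn]
      refine ⟨ht2, ?_⟩
      rwa [add_sub_cancel_right]
    exact ⟨s, s + 1, hs, hsrc, hex, fun u hu => hsrc_uniq _ u hsrc hu,
      (arc_iff hn _ _).mpr (Or.inr ⟨hσs, rfl⟩)⟩
  have ht1' : σ (s - 1 - 1) = true := by simpa using ht1
  have ht2' : σ (s + 1) = false := by simpa using ht2
  have hu1 : ∀ v, cycleArc n σ (s - 1) v ↔ v = s := by
    intro v
    rw [arc_iff hn]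
    constructor
    · rintro (⟨-, hv⟩ | ⟨hvf, hv⟩)
      · rw [hv, sub_add_cancel]
      · exfalso
        have hv' : v = s - 1 - 1 := by rw [hv]; ring
        rw [hv', ht1'] at hvf
        simp at hvf
    · rintro rfl
      exact Or.inl ⟨hσs1, (sub_add_cancel _ 1).symm⟩
  have hu2 : ∀ v, cycleArc n σ (s + 1) v ↔ v = s := by
    intro v
    rw [arc_iff hn]
    constructor
    · rintro (⟨hvt, -⟩ | ⟨-, hv⟩)
      · rw [ht2'] at hvt; simp at hvt
      · exact add_right_cancel hv.symm
    · rintro rfl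
      exact Or.inr ⟨hσs, rfl⟩
  have hne12 : s - 1 ≠ s + 1 := by
    intro h
    have h2 : s = s + (1 + 1) := by
      rw [← add_assoc, ← sub_eq_iff_eq_add.mp h]
    have h3 : (1 + 1 : Fin n) = 0 := left_eq_add.mp h2
    have hv := congrArg Fin.val h3
    rw [Fin.val_add, Fin.val_one', Fin.val_zero] at hv
    rw [Nat.mod_eq_of_lt (show 1 < n by omega), Nat.mod_eq_of_lt (show 1 + 1 < n by omega)] at hv
    omega
  apply hne12
  apply hf
  exact dWeight_congr fun y =>
    (inD_uniqueOut h0 hs hu1 y).trans (inD_uniqueOut h0 hs hu2 y).symm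
end

section
/- For every odd n ≥ 3 and every two-element subset D of {0,1,…,n−1}, the unidirectional oriented cycle C⃗_n is D-antimagic. -/
open scoped Classical

/-!
For `D ⊆ {0, …, n-1}` the `D`-neighbours of `v` in `C⃗_n` are exactly the vertices
`v + k mod n`, `k ∈ D`. Under the identity labelling the `D`-weight of `v` is therefore congruent to
`|D| v + ∑_{k ∈ D} (k + 1)` modulo `n`, which determines `v` whenever `|D|` is invertible
modulo `n`; for `|D| = 2` this is the oddness of `n`.
-/

def cycleAdd {n : ℕ} (u : Fin n) (k : ℕ) : Fin n :=
  ⟨((u : ℕ) + k) % n, Nat.mod_lt _ u.pos⟩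

lemma cycleAdd_injOn {n : ℕ} (u : Fin n) : Set.InjOn (cycleAdd u) {k | k < n} := by
  intro k hk l hl h
  have h' : (u : ℕ) + k ≡ (u : ℕ) + l [MOD n] := congrArg Fin.val h
  simpa [Nat.ModEq, Nat.mod_eq_of_lt hk, Nat.mod_eq_of_lt hl] using h'.add_left_cancel' _

@[simp]
lemma cycleAdd_zero {n : ℕ} (u : Fin n) : cycleAdd u 0 = u :=
  Fin.ext (Nat.mod_eq_of_lt u.isLt)

lemma cycleAdd_cycleAdd {n : ℕ} (u : Fin n) (j k : ℕ) :
    cycleAdd (cycleAdd u j) k = cycleAdd u (j + k) :=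
  Fin.ext (by simp only [cycleAdd, Nat.mod_add_mod, add_assoc])

lemma uniArc_iff {n : ℕ} {u v : Fin n} : uniArc n u v ↔ v = cycleAdd u 1 :=
  Fin.ext_iff (a := v) (b := cycleAdd u 1) |>.symm

lemma walkLen_uniArc_iff {n k : ℕ} {u v : Fin n} :
    WalkLen (uniArc n) k u v ↔ v = cycleAdd u k := by
  induction k generalizing u with
  | zero => simp [WalkLen, eq_comm]
  | succ k ih => simp [WalkLen, ih, uniArc_iff, cycleAdd_cycleAdd, add_comm 1 k]

lemma hasDist_uniArc_iff {n k : ℕ} (hk : k < n) {u v : Fin n} :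
    HasDist (uniArc n) u v k ↔ v = cycleAdd u k := by
  refine ⟨fun h => walkLen_uniArc_iff.1 h.1, fun h => ⟨walkLen_uniArc_iff.2 h, ?_⟩⟩
  intro m hm hwalk
  exact hm.ne (cycleAdd_injOn u (hm.trans hk) hk (walkLen_uniArc_iff.1 hwalk ▸ h))

lemma dWeight_uniArc {n : ℕ} (D : Finset ℕ) (hD : ∀ k ∈ D, k < n) (f : Fin n → ℕ)
    (u : Fin n) : dWeight (uniArc n) D f u = ∑ k ∈ D, f (cycleAdd u k) := by
  have hnbhd : ({y | InDNbhd (uniArc n) D u y} : Finset (Fin n)) = D.image (cycleAdd u) := by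
    ext y
    simp only [Finset.mem_filter, Finset.mem_univ, true_and, Finset.mem_image, InDNbhd,
      Finset.mem_coe]
    exact exists_congr fun k => and_congr_right fun hk =>
      (hasDist_uniArc_iff (hD k hk)).trans eq_comm
  rw [dWeight, ← Finset.sum_filter, hnbhd, Finset.sum_image]
  exact (cycleAdd_injOn u).mono fun k hk => hD k hk

lemma natCast_dWeight_uniArc {n : ℕ} (D : Finset ℕ) (hD : ∀ k ∈ D, k < n) (u : Fin n) :
    ((dWeight (uniArc n) D (fun y => (y : ℕ) + 1) u : ℕ) : ZMod n) =
      D.card * (u : ℕ) + ∑ k ∈ D, ((k : ZMod n) + 1) := by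
  simp [dWeight_uniArc D hD, cycleAdd, Finset.sum_add_distrib, add_assoc]

theorem dAntimagic_uniArc_of_coprime {n : ℕ} (D : Finset ℕ) (hD : ∀ k ∈ D, k < n)
    (hcop : D.card.Coprime n) : DAntimagic (Fin n) (uniArc n) D := by
  refine ⟨finCongr (Fintype.card_fin n).symm, fun v w hvw => ?_⟩
  change dWeight (uniArc n) D (fun y => (y : ℕ) + 1) v =
    dWeight (uniArc n) D (fun y => (y : ℕ) + 1) w at hvw
  have hmod := congrArg (fun x : ℕ => (x : ZMod n)) hvw
  simp only [natCast_dWeight_uniArc D hD, add_left_inj] at hmod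
  have hvw' := (ZMod.unitOfCoprime _ hcop).isUnit.mul_left_cancel hmod
  rw [ZMod.natCast_eq_natCast_iff', Nat.mod_eq_of_lt v.isLt, Nat.mod_eq_of_lt w.isLt] at hvw'
  exact Fin.ext hvw'

theorem uni_odd_antimagic_card_two_general (n : ℕ) (hodd : Odd n) (D : Set ℕ)
    (hsub : D ⊆ {m : ℕ | m < n}) (hcard : D.ncard = 2) :
    DAntimagic (Fin n) (uniArc n) D := by
  lift D to Finset ℕ using (Set.finite_lt_nat n).subset hsub
  rw [Set.ncard_coe_finset] at hcard
  exact dAntimagic_uniArc_of_coprime D (fun k hk => hsub hk)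
    (hcard ▸ Nat.coprime_two_left.2 hodd)

/-- For every odd `n ≥ 3` and every two-element `D ⊆ {0, …, n-1}`, the
unidirectional `C⃗_n` is `D`-antimagic. -/
theorem uni_odd_antimagic_card_two (n : ℕ) (hn : 3 ≤ n) (hodd : Odd n) (D : Set ℕ)
    (hsub : D ⊆ {m : ℕ | m < n}) (hcard : D.ncard = 2) :
    DAntimagic (Fin n) (uniArc n) D :=
  uni_odd_antimagic_card_two_general n hodd D hsub hcard
end
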